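/- For real square matrices A, B, C with Ind(B) = k and Ind(C) = l, rank([[A, B^k],[C^l, 0]]) = rank(B^k) + rank(C^l) + rank((I − BB^D) A (I − CC^D)), where B^D, C^D are Drazin inverses. Consequently, for Â = A + εB with Ind(A) = k and D = A^{k-1}B + ⋯ + BA^{k-1}, the condition (I − AA^D) D (I − AA^D) = 0 holds if and only if rank([[D, A^k],[A^k, 0]]) = 2·rank(A^k). -/

import Mathlib

open Matrix Finset

noncomputable section

/-- The dual matrix `A + εB` as a matrix over the dual numbers `ℝ[ε]/(ε²)`. -/
def dmat {m : Type*} (A B : Matrix m m ℝ) : Matrix m m (DualNumber ℝ) :=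
  Matrix.of fun i j => TrivSqZeroExt.inl (A i j) + TrivSqZeroExt.inr (B i j)

/-- `x` is a Drazin inverse of `a` with index parameter `k`
(for `k = 1` this is the group inverse). -/
def IsDrazin {R : Type*} [Monoid R] (k : ℕ) (a x : R) : Prop :=
  a ^ k * x * a = a ^ k ∧ x * a * x = x ∧ a * x = x * a

/-- `A` has index `k`: `k` is the smallest nonnegative integer with
`rank (A^k) = rank (A^(k+1))`. -/
def hasIndex {m : Type*} [Fintype m] [DecidableEq m] (A : Matrix m m ℝ) (k : ℕ) : Prop :=
  (A ^ (k + 1)).rank = (A ^ k).rank ∧ ∀ j < k, (A ^ (j + 1)).rank ≠ (A ^ j).rank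

/-- `D = A^{k-1} B + A^{k-2} B A + ⋯ + B A^{k-1}`. -/
def dsum {m : Type*} [Fintype m] [DecidableEq m] (A B : Matrix m m ℝ) (k : ℕ) :
    Matrix m m ℝ :=
  ∑ i ∈ Finset.range k, A ^ i * B * A ^ (k - 1 - i)

/-!
Put `P = B B^D` and `Q = C C^D`: idempotents with `P B^k = B^k`, `C^l Q = C^l`,
`B^k (B^D)^k = P` and `(C^D)^l C^l = Q`. Subtracting `A (C^D)^l` times the second block row from
the first, and then the first block column times `(B^D)^k A (1 - Q)` from the first, replaces the
corner `A` by `(1 - P) A (1 - Q)` without changing the rank. Now `P` kills the new corner and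
fixes `B^k`, so the two block columns have independent column spaces; `Q` does the same for the
block rows, and the three ranks add. For `B = C = A` the extra term vanishes exactly when the
corner block does.
-/

namespace IsDrazin

variable {R : Type*} [Monoid R] {k : ℕ} {a x : R}

theorem commute (h : IsDrazin k a x) : Commute a x := h.2.2

theorem pow_succ_mul (h : IsDrazin k a x) : a ^ (k + 1) * x = a ^ k := by
  rw [pow_succ, mul_assoc, h.commute.eq, ← mul_assoc, h.1]

theorem isIdempotentElem_mul (h : IsDrazin k a x) : IsIdempotentElem (a * x) := by
  rw [IsIdempotentElem, mul_assoc, ← mul_assoc x, h.2.1]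

theorem mul_mul_pow (h : IsDrazin k a x) : a * x * a ^ k = a ^ k := by
  rw [mul_assoc, (h.commute.pow_left k).symm.eq, ← mul_assoc, ← pow_succ', h.pow_succ_mul]

theorem pow_mul_mul (h : IsDrazin k a x) : a ^ k * (a * x) = a ^ k := by
  rw [← mul_assoc, ← pow_succ, h.pow_succ_mul]

theorem pow_mul_pow (h : IsDrazin k a x) : a ^ k * x ^ k = a * x := by
  rw [← h.commute.mul_pow]
  rcases k with _ | k
  · simpa [h.commute.eq] using h.1.symm
  · exact h.isIdempotentElem_mul.pow_succ_eq k

theorem pow_mul_pow' (h : IsDrazin k a x) : x ^ k * a ^ k = a * x := by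
  rw [← (h.commute.pow_pow k k).eq, h.pow_mul_pow]

end IsDrazin

namespace Matrix

section Rank

variable {K m n n₁ n₂ : Type*} [Field K] [Fintype n₁] [Fintype n₂]

theorem rank_eq_zero_iff [Fintype n] (M : Matrix m n K) : M.rank = 0 ↔ M = 0 := by
  classical
  rw [rank, Submodule.finrank_eq_zero, LinearMap.range_eq_bot, ← toLin'_apply',
    LinearEquiv.map_eq_zero_iff]

theorem range_mulVecLin_fromCols (X : Matrix m n₁ K) (Y : Matrix m n₂ K) :
    LinearMap.range (fromCols X Y).mulVecLin =
      LinearMap.range X.mulVecLin ⊔ LinearMap.range Y.mulVecLin := by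
  have hcol : (fromCols X Y).col = Sum.elim X.col Y.col := by
    ext (j | j) i <;> rfl
  rw [range_mulVecLin, range_mulVecLin, range_mulVecLin, hcol, Set.Sum.elim_range,
    Submodule.span_union]

variable [Fintype m]

theorem rank_fromCols_of_mul_eq (X : Matrix m n₁ K) (Y : Matrix m n₂ K) (P : Matrix m m K)
    (hX : P * X = 0) (hY : P * Y = Y) :
    (fromCols X Y).rank = X.rank + Y.rank := by
  have hinf : LinearMap.range X.mulVecLin ⊓ LinearMap.range Y.mulVecLin = ⊥ := by
    rw [eq_bot_iff]
    rintro v ⟨⟨a, rfl⟩, ⟨b, hb⟩⟩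
    have hker : P *ᵥ (X *ᵥ a) = 0 := by rw [mulVec_mulVec, hX, zero_mulVec]
    have hfix : P *ᵥ (Y *ᵥ b) = Y *ᵥ b := by rw [mulVec_mulVec, hY]
    simp only [mulVecLin_apply] at hb ⊢
    rw [Submodule.mem_bot, ← hker, ← hb, hfix]
  have := Submodule.finrank_sup_add_finrank_inf_eq
    (LinearMap.range X.mulVecLin) (LinearMap.range Y.mulVecLin)
  rwa [hinf, finrank_bot, add_zero, ← range_mulVecLin_fromCols] at this

theorem rank_fromRows_of_mul_eq [Fintype n] (X : Matrix n₁ n K) (Y : Matrix n₂ n K)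
    (Q : Matrix n n K) (hX : X * Q = 0) (hY : Y * Q = Y) :
    (fromRows X Y).rank = X.rank + Y.rank := by
  rw [← rank_transpose, transpose_fromRows,
    rank_fromCols_of_mul_eq Xᵀ Yᵀ Qᵀ (by rw [← transpose_mul, hX, transpose_zero])
      (by rw [← transpose_mul, hY]),
    rank_transpose, rank_transpose]

theorem rank_fromBlocks_zero₂₂_of_mul_eq [Fintype n] {o p : Type*} [Fintype o] [Fintype p]
    (N : Matrix m n K) (R : Matrix m o K) (S : Matrix p n K) (P : Matrix m m K)
    (Q : Matrix n n K) (hPN : P * N = 0) (hPR : P * R = R) (hNQ : N * Q = 0)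
    (hSQ : S * Q = S) :
    (fromBlocks N R S (0 : Matrix p o K)).rank = N.rank + R.rank + S.rank := by
  rw [← fromCols_fromRows_eq_fromBlocks,
    rank_fromCols_of_mul_eq _ _ (fromBlocks P 0 0 (0 : Matrix p p K))
      (by simp [fromBlocks_mul_fromRows, hPN]) (by simp [fromBlocks_mul_fromRows, hPR]),
    rank_fromRows_of_mul_eq N S Q hNQ hSQ,
    rank_fromRows_of_mul_eq R 0 0 (Matrix.mul_zero R) (Matrix.mul_zero 0),
    rank_zero]
  ring

end Rank

theorem rank_fromBlocks_add_mul_add_mul {K m n : Type*} [CommRing K] [Fintype m]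
    [DecidableEq m] [Fintype n] [DecidableEq n] (A : Matrix m m K) (R : Matrix m n K)
    (S : Matrix n m K) (U : Matrix m n K) (V : Matrix n m K) :
    (fromBlocks (A + U * S + R * V) R S (0 : Matrix n n K)).rank =
      (fromBlocks A R S (0 : Matrix n n K)).rank := by
  have hfactor : fromBlocks (A + U * S + R * V) R S (0 : Matrix n n K) =
      fromBlocks 1 U 0 1 * fromBlocks A R S 0 * fromBlocks 1 0 V 1 := by
    simp [fromBlocks_multiply, add_assoc]
  rw [hfactor, rank_mul_eq_left_of_isUnit_det _ _ (by simp),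
    rank_mul_eq_right_of_isUnit_det _ _ (by simp)]

section Drazin

variable {K m : Type*} [Field K] [Fintype m] [DecidableEq m]

theorem rank_fromBlocks_pow_of_isDrazin {k l : ℕ} {B C BD CD : Matrix m m K}
    (hB : IsDrazin k B BD) (hC : IsDrazin l C CD) (A : Matrix m m K) :
    (fromBlocks A (B ^ k) (C ^ l) (0 : Matrix m m K)).rank =
      (B ^ k).rank + (C ^ l).rank + ((1 - B * BD) * A * (1 - C * CD)).rank := by
  have hcleared : (1 - B * BD) * A * (1 - C * CD) =
      A + -(A * CD ^ l) * C ^ l + B ^ k * -(BD ^ k * (A - A * (C * CD))) := by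
    rw [Matrix.neg_mul, Matrix.mul_neg, mul_assoc A, hC.pow_mul_pow', ← mul_assoc (B ^ k),
      hB.pow_mul_pow]
    noncomm_ring
  have hcorner_left : B * BD * ((1 - B * BD) * A * (1 - C * CD)) = 0 := by
    rw [← mul_assoc, ← mul_assoc, hB.isIdempotentElem_mul.mul_one_sub_self, Matrix.zero_mul,
      Matrix.zero_mul]
  have hcorner_right : (1 - B * BD) * A * (1 - C * CD) * (C * CD) = 0 := by
    rw [mul_assoc, hC.isIdempotentElem_mul.one_sub_mul_self, Matrix.mul_zero]
  rw [← rank_fromBlocks_add_mul_add_mul A, ← hcleared,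
    rank_fromBlocks_zero₂₂_of_mul_eq _ _ _ (B * BD) (C * CD) hcorner_left hB.mul_mul_pow
      hcorner_right hC.pow_mul_mul]
  ring

theorem rank_fromBlocks_pow_eq_two_mul_iff {k : ℕ} {A AD : Matrix m m K}
    (hA : IsDrazin k A AD) (M : Matrix m m K) :
    (fromBlocks M (A ^ k) (A ^ k) (0 : Matrix m m K)).rank = 2 * (A ^ k).rank ↔
      (1 - A * AD) * M * (1 - A * AD) = 0 := by
  rw [rank_fromBlocks_pow_of_isDrazin hA hA, ← rank_eq_zero_iff]
  omega

end Drazin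

end Matrix

theorem tian_rank_formula {n : ℕ} :
    (∀ (k l : ℕ) (A B C BD CD : Matrix (Fin n) (Fin n) ℝ),
      hasIndex B k → IsDrazin k B BD → hasIndex C l → IsDrazin l C CD →
      (Matrix.fromBlocks A (B ^ k) (C ^ l) (0 : Matrix (Fin n) (Fin n) ℝ)).rank =
        (B ^ k).rank + (C ^ l).rank + ((1 - B * BD) * A * (1 - C * CD)).rank) ∧
    (∀ (k : ℕ) (A B AD : Matrix (Fin n) (Fin n) ℝ),
      hasIndex A k → IsDrazin k A AD →
      ((1 - A * AD) * dsum A B k * (1 - A * AD) = 0 ↔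
        (Matrix.fromBlocks (dsum A B k) (A ^ k) (A ^ k)
          (0 : Matrix (Fin n) (Fin n) ℝ)).rank = 2 * (A ^ k).rank)) :=
  ⟨fun _ _ A _ _ _ _ _ hB _ hC => rank_fromBlocks_pow_of_isDrazin hB hC A,
    fun _ A B _ _ hA => (rank_fromBlocks_pow_eq_two_mul_iff hA (dsum A B _)).symm⟩
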